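/- arXiv:1304.3328 — 6 statements merged into one kernel-verified Lean document; each statement's English description precedes it below -/
import Mathlib

section
/- Let F be a field, N a positive integer, t an element of F, and x_1, …, x_N pairwise distinct elements of F. Then the sum of the Lagrange-type weights A_i satisfies ∑_{i=1}^N ∏_{j ≠ i} (t·x_i − x_j)/(x_i − x_j) = 1 + t + t^2 + … + t^{N−1}. -/
open Polynomial Finset

/-- Let `F` be a field, `N` a positive integer, `t ∈ F`, and
`x₁, …, x_N` pairwise distinct elements of `F`.  Then
`∑_{i=1}^N ∏_{j ≠ i} (t·x_i − x_j)/(x_i − x_j) = 1 + t + ⋯ + t^{N−1}`. -/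
theorem sum_lagrange_weights_eq_geom_sum {F : Type*} [Field F] {N : ℕ} (hN : 0 < N)
    (t : F) (x : Fin N → F) (hx : Function.Injective x) :
    ∑ i : Fin N, ∏ j ∈ Finset.univ.erase i, (t * x i - x j) / (x i - x j)
      = ∑ k ∈ Finset.range N, t ^ k := by
  have hinj : Set.InjOn x (Finset.univ : Finset (Fin N)) := hx.injOn
  -- each term is the evaluation of the Lagrange basis polynomial at t * x i
  have hterm : ∀ i : Fin N, ∏ j ∈ Finset.univ.erase i, (t * x i - x j) / (x i - x j)
      = (Lagrange.basis Finset.univ x i).eval (t * x i) := by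
    intro i
    rw [Lagrange.basis, eval_prod]
    refine Finset.prod_congr rfl fun j hj => ?_
    simp [Lagrange.basisDivisor, div_eq_mul_inv, mul_comm]
  have hdeg : ∀ i : Fin N, (Lagrange.basis Finset.univ x i).natDegree < N := by
    intro i
    rw [Lagrange.natDegree_basis hinj (Finset.mem_univ i)]
    simp only [Finset.card_univ, Fintype.card_fin]
    omega
  calc ∑ i : Fin N, ∏ j ∈ Finset.univ.erase i, (t * x i - x j) / (x i - x j)
      = ∑ i : Fin N, ∑ k ∈ Finset.range N,
          (Lagrange.basis Finset.univ x i).coeff k * (t * x i) ^ k := by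
        refine Finset.sum_congr rfl fun i _ => ?_
        rw [hterm i, eval_eq_sum_range' (hdeg i)]
    _ = ∑ k ∈ Finset.range N, t ^ k *
          ∑ i : Fin N, x i ^ k * (Lagrange.basis Finset.univ x i).coeff k := by
        rw [Finset.sum_comm]
        refine Finset.sum_congr rfl fun k _ => ?_
        rw [Finset.mul_sum]
        refine Finset.sum_congr rfl fun i _ => ?_
        ring
    _ = ∑ k ∈ Finset.range N, t ^ k := by
        refine Finset.sum_congr rfl fun k hk => ?_
        have hk' : k < N := Finset.mem_range.mp hk
        have hXk : (X ^ k : F[X]) = Lagrange.interpolate Finset.univ x (fun i => x i ^ k) := by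
          have := Lagrange.eq_interpolate (f := (X ^ k : F[X])) hinj
            (by simpa [degree_X_pow] using (by exact_mod_cast hk' : ((k : ℕ) : WithBot ℕ) < (N : WithBot ℕ)))
          simpa using this
        have : ∑ i : Fin N, x i ^ k * (Lagrange.basis Finset.univ x i).coeff k = 1 := by
          have hc := congrArg (fun p => Polynomial.coeff p k) hXk
          simp only [Lagrange.interpolate_apply, Polynomial.finset_sum_coeff,
            Polynomial.coeff_C_mul, Polynomial.coeff_X_pow, if_pos rfl] at hc
          exact hc.symm
        rw [this, mul_one]
end

section
/- Assume additionally that t ≠ 0. Then in the formal power series ring F[[z]] the following partial fraction decomposition holds: F(z) = t^{−N} + (t − 1)·t^{−N} · ∑_{i=1}^N A_i · (1 − t·z·x_i)^{−1}, where (1 − t·z·x_i)^{−1} denotes the inverse of the power series 1 − t·z·x_i (which is invertible since its constant term is 1). -/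
/-!
Write `P = ∏ⱼ (X - xⱼ)`. The polynomial `(P(tX) - P(X)) / X` has degree `< N`, and the Leibniz
rule for `p ↦ (p(tX) - p(X)) / X` computes its value at `xᵢ` as `(t - 1) ∏_{j ≠ i} (t xᵢ - xⱼ)`
without dividing by `xᵢ`, so no node has to be nonzero. Lagrange interpolation at the nodes `xᵢ`
therefore gives `P(tX) - P(X) = (t - 1) X ∑ᵢ Aᵢ ∏_{j ≠ i} (X - xⱼ)`. Homogenizing this identity in
degree `N` and substituting `(1, tz)` turns it into
`t^N ∏ⱼ (1 - xⱼ z) - ∏ⱼ (1 - t xⱼ z) = (t - 1) ∑ᵢ Aᵢ ∏_{j ≠ i} (1 - t xⱼ z)`,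
and dividing by `∏ⱼ (1 - t xⱼ z)` gives the partial fraction decomposition.
-/

namespace Polynomial

section Dilation

variable {R : Type*} [CommRing R]

/-- `(p(tX) - p(X)) / X`, i.e. `t - 1` times the Jackson `t`-derivative of `p`. -/
noncomputable def dilationDiff (t : R) (p : R[X]) : R[X] :=
  divX (p.comp (C t * X) - p)

theorem dilationDiff_mul_X (t : R) (p : R[X]) :
    dilationDiff t p * X = p.comp (C t * X) - p := by
  have h := divX_mul_X_add (p.comp (C t * X) - p)
  rwa [coeff_sub, comp_C_mul_X_coeff, pow_zero, mul_one, sub_self, map_zero, add_zero] at h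

theorem dilationDiff_mul (t : R) (p q : R[X]) :
    dilationDiff t (p * q) = dilationDiff t p * q.comp (C t * X) + p * dilationDiff t q := by
  apply isRegular_X.right
  simp only [add_mul, mul_right_comm _ (q.comp _), mul_assoc p, dilationDiff_mul_X, mul_comp]
  ring

theorem dilationDiff_X_sub_C (t a : R) : dilationDiff t (X - C a) = C (t - 1) := by
  apply isRegular_X.right
  simp only [dilationDiff_mul_X, sub_comp, X_comp, C_comp, map_sub, map_one]
  ring

theorem eval_dilationDiff_X_sub_C_mul (t a : R) (q : R[X]) :
    (dilationDiff t ((X - C a) * q)).eval a = (t - 1) * q.eval (t * a) := by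
  simp [dilationDiff_mul, dilationDiff_X_sub_C, eval_comp]

theorem degree_dilationDiff_lt (t : R) {p : R[X]} (hp : p ≠ 0) :
    (dilationDiff t p).degree < p.degree := by
  rw [degree_eq_natDegree hp, degree_lt_iff_coeff_zero]
  intro m hm
  simp [dilationDiff, coeff_divX, coeff_eq_zero_of_natDegree_lt (Nat.lt_succ_of_le hm)]

end Dilation

section Interpolation

open Finset

variable {F : Type*} [Field F] {ι : Type*} [DecidableEq ι]

theorem prod_X_sub_C_comp_sub_prod_X_sub_C {s : Finset ι} {a : ι → F} (ha : Set.InjOn a s)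
    (t : F) :
    ((∏ j ∈ s, (X - C (a j)) : F[X])).comp (C t * X) - ∏ j ∈ s, (X - C (a j)) =
      C (t - 1) * ∑ i ∈ s, C (∏ j ∈ s.erase i, (t * a i - a j) / (a i - a j)) *
        (X * ∏ j ∈ s.erase i, (X - C (a j))) := by
  have hdeg : ((∏ j ∈ s, (X - C (a j)) : F[X])).degree = #s := by
    simp [degree_prod]
  have hinterp := Lagrange.eq_interpolate_of_eval_eq
    (fun i => (t - 1) * ∏ j ∈ s.erase i, (t * a i - a j)) ha
    ((degree_dilationDiff_lt t (monic_prod_X_sub_C a s).ne_zero).trans_eq hdeg)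
    (fun i hi => by
      rw [← mul_prod_erase s _ hi, eval_dilationDiff_X_sub_C_mul, eval_prod]
      simp)
  rw [← dilationDiff_mul_X, hinterp, Lagrange.interpolate_apply, sum_mul, mul_sum]
  refine sum_congr rfl fun i _ => ?_
  simp only [Lagrange.basis, Lagrange.basisDivisor, prod_mul_distrib, ← map_prod,
    div_eq_mul_inv, map_mul, prod_inv_distrib]
  ring

end Interpolation

section Homogenization

variable {R : Type*} [CommSemiring R] {ι : Type*}

theorem homogenize_prod_of_natDegree_le_one {s : Finset ι} {p : ι → R[X]}
    (hp : ∀ j ∈ s, (p j).natDegree ≤ 1) :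
    homogenize (∏ j ∈ s, p j) s.card = ∏ j ∈ s, homogenize (p j) 1 := by
  simpa using homogenize_finsetProd (n := fun _ => 1) hp

theorem homogenize_X_mul_prod_erase_of_natDegree_le_one [DecidableEq ι] {s : Finset ι}
    {p : ι → R[X]} (hp : ∀ j ∈ s, (p j).natDegree ≤ 1) {i : ι} (hi : i ∈ s) :
    homogenize (X * ∏ j ∈ s.erase i, p j) s.card =
      .X 0 * ∏ j ∈ s.erase i, homogenize (p j) 1 := by
  have hp' : ∀ j ∈ s.erase i, (p j).natDegree ≤ 1 := fun j hj => hp j (Finset.mem_of_mem_erase hj)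
  rw [← Finset.card_erase_add_one hi, add_comm, homogenize_mul _ _ natDegree_X_le
    ((natDegree_prod_le _ _).trans (by simpa using Finset.sum_le_sum hp')),
    homogenize_X one_ne_zero, homogenize_prod_of_natDegree_le_one hp']
  simp

end Homogenization

end Polynomial

namespace PowerSeries

open Finset

variable {F : Type*} [Field F] {ι : Type*} [DecidableEq ι]

theorem C_pow_mul_prod_one_sub_sub_prod_one_sub {s : Finset ι} {a : ι → F} (ha : Set.InjOn a s)
    (t : F) :
    C (t ^ #s) * ∏ j ∈ s, (1 - C (a j) * X) - ∏ j ∈ s, (1 - C (t * a j) * X) =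
      C (t - 1) * ∑ i ∈ s, C (∏ j ∈ s.erase i, (t * a i - a j) / (a i - a j)) *
        ∏ j ∈ s.erase i, (1 - C (t * a j) * X) := by
  -- Evaluating the degree-`#s` homogenization at `(1, t z)` substitutes `1 / (t z)` for the
  -- variable and multiplies through by `(t z) ^ #s`.
  have h := congrArg (fun p => MvPolynomial.aeval ![1, C t * X] (p.homogenize #s))
    (Polynomial.prod_X_sub_C_comp_sub_prod_X_sub_C ha t)
  have hlin : ∀ j ∈ s, (Polynomial.X - Polynomial.C (a j)).natDegree ≤ 1 := fun j _ =>
    Polynomial.natDegree_X_sub_C_le _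
  have hlin_scaled : ∀ j ∈ s, (Polynomial.C t * Polynomial.X - Polynomial.C (a j)).natDegree ≤ 1 :=
    fun j _ => (Polynomial.natDegree_sub_le _ _).trans
      (by simpa using Polynomial.natDegree_C_mul_le t Polynomial.X)
  simp only [Polynomial.prod_comp, Polynomial.sub_comp, Polynomial.X_comp, Polynomial.C_comp,
    Polynomial.homogenize_sub, Polynomial.homogenize_C_mul, Polynomial.homogenize_finsetSum,
    Polynomial.homogenize_prod_of_natDegree_le_one hlin,
    Polynomial.homogenize_prod_of_natDegree_le_one hlin_scaled] at h
  rw [sum_congr rfl fun i hi => by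
    rw [Polynomial.homogenize_X_mul_prod_erase_of_natDegree_le_one hlin hi]] at h
  simp only [ne_eq, one_ne_zero, not_false_eq_true, Polynomial.homogenize_X,
    Polynomial.homogenize_C, Polynomial.homogenize_sub, tsub_self, pow_zero, mul_one, pow_one,
    map_sub, map_prod, map_mul, map_sum, map_one, one_mul, MvPolynomial.algHom_C, algebraMap_eq,
    MvPolynomial.aeval_X, Matrix.cons_val_zero, Matrix.cons_val_one, Matrix.cons_val_fin_one] at h
  have hscale : ∀ j, C (a j) * (C t * X) = C (t * a j) * X := fun j => by rw [map_mul]; ring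
  have hfactor : ∀ j, C t - C (t * a j) * X = C t * (1 - C (a j) * X) := fun j => by
    rw [map_mul]; ring
  simp only [hscale, hfactor, prod_mul_distrib, prod_const, ← map_pow] at h
  simpa only [map_prod, map_sub, map_one] using h

theorem inv_mul_prod_eq_prod_erase {s : Finset ι} {f : ι → F⟦X⟧} {i : ι} (hi : i ∈ s)
    (hf : constantCoeff (f i) ≠ 0) :
    (f i)⁻¹ * ∏ j ∈ s, f j = ∏ j ∈ s.erase i, f j := by
  rw [← mul_prod_erase s f hi, ← mul_assoc, PowerSeries.inv_mul_cancel _ hf, one_mul]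

end PowerSeries

open PowerSeries

theorem partial_fraction_decomposition_general {F : Type*} [Field F] {N : ℕ}
    (t : F) (ht : t ≠ 0) (x : Fin N → F) (hx : Function.Injective x) :
    (∏ i : Fin N, (1 - PowerSeries.C (x i) * PowerSeries.X)) *
        (∏ i : Fin N, (1 - PowerSeries.C (t * x i) * PowerSeries.X))⁻¹
      = PowerSeries.C ((t ^ N)⁻¹)
        + PowerSeries.C ((t - 1) * (t ^ N)⁻¹) *
            ∑ i : Fin N,
              PowerSeries.C (∏ j ∈ Finset.univ.erase i, (t * x i - x j) / (x i - x j)) *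
                (1 - PowerSeries.C (t * x i) * PowerSeries.X)⁻¹ := by
  have key := C_pow_mul_prod_one_sub_sub_prod_one_sub (s := Finset.univ) hx.injOn t
  rw [Finset.card_univ, Fintype.card_fin] at key
  have hden : constantCoeff (∏ i : Fin N, (1 - C (t * x i) * X)) ≠ 0 := by
    simp [map_prod]
  have hterm : ∀ i, (1 - C (t * x i) * X)⁻¹ * ∏ j : Fin N, (1 - C (t * x j) * X) =
      ∏ j ∈ Finset.univ.erase i, (1 - C (t * x j) * X) := fun i =>
    inv_mul_prod_eq_prod_erase (f := fun j => 1 - C (t * x j) * X) (Finset.mem_univ i) (by simp)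
  have hinv : C (t ^ N)⁻¹ * C (t ^ N) = (1 : F⟦X⟧) := by
    rw [← map_mul, inv_mul_cancel₀ (pow_ne_zero N ht), map_one]
  rw [eq_comm, eq_mul_inv_iff_mul_eq hden, add_mul, mul_assoc, Finset.sum_mul, map_mul]
  simp only [mul_assoc, hterm]
  rw [mul_left_comm, ← key, mul_sub, ← mul_assoc, hinv, one_mul, add_sub_cancel]

/-- Let `F` be a field, `N` a positive integer, `t ∈ F` with `t ≠ 0`, and
`x₁, …, x_N` pairwise distinct elements of `F`.  With
`A_i = ∏_{j ≠ i} (t·x_i − x_j)/(x_i − x_j)` and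
`F(z) = ∏_{i=1}^N (1 − z·x_i) · ∏_{i=1}^N (1 − t·z·x_i)⁻¹ ∈ F[[z]]`, the partial fraction
decomposition
`F(z) = t^{−N} + (t − 1)·t^{−N} · ∑_{i=1}^N A_i · (1 − t·z·x_i)⁻¹` holds in `F[[z]]`. -/
theorem partial_fraction_decomposition {F : Type*} [Field F] {N : ℕ} (hN : 0 < N)
    (t : F) (ht : t ≠ 0) (x : Fin N → F) (hx : Function.Injective x) :
    (∏ i : Fin N, (1 - PowerSeries.C (x i) * PowerSeries.X)) *
        (∏ i : Fin N, (1 - PowerSeries.C (t * x i) * PowerSeries.X))⁻¹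
      = PowerSeries.C ((t ^ N)⁻¹)
        + PowerSeries.C ((t - 1) * (t ^ N)⁻¹) *
            ∑ i : Fin N,
              PowerSeries.C (∏ j ∈ Finset.univ.erase i, (t * x i - x j) / (x i - x j)) *
                (1 - PowerSeries.C (t * x i) * PowerSeries.X)⁻¹ :=
  partial_fraction_decomposition_general t ht x hx
end

section
/- Assume additionally that t ≠ 0 and t ≠ 1. Then for every integer n ≥ 1 one has ∑_{i=1}^N A_i · x_i^n = (t^{N}/(t^{n}·(t − 1))) · F_n, where F_n is the coefficient of z^n in the power series F(z) = ∏_{i=1}^N (1 − z·x_i)/(1 − t·z·x_i). -/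
/-! With `P = ∏ (X - x_j)` and `Q = ∏ (X - t x_j)`, both monic of degree `N`, Lagrange
interpolation of `P - Q` at the distinct nodes `t x_i` expresses it through the polynomials
`∏_{j ≠ i} (X - t x_j)`. Reflecting at degree `N` turns this into the partial fraction expansion
`F(z) = 1 + z ∑ᵢ wᵢ / (1 - t xᵢ z)` with `wᵢ = P(t xᵢ) ∏_{j ≠ i} (t xᵢ - t x_j)⁻¹`, and
`P(t xᵢ) = (t - 1) xᵢ ∏_{j ≠ i} (t xᵢ - x_j)` gives `wᵢ = (t - 1) xᵢ Aᵢ / t^(N-1)`. -/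

namespace Polynomial

open Lagrange Finset

section CommRing

variable {R ι : Type*} [CommRing R]

theorem reflect_sum (s : Finset ι) (f : ι → R[X]) (N : ℕ) :
    reflect N (∑ i ∈ s, f i) = ∑ i ∈ s, reflect N (f i) := by
  ext k
  simp [coeff_reflect]

theorem reflect_X_sub_C (c : R) : reflect 1 (X - C c) = 1 - C c * X := by
  simp [reflect_sub, reflect_C]

theorem natDegree_nodal_le (s : Finset ι) (v : ι → R) : (nodal s v).natDegree ≤ #s :=
  (natDegree_prod_le _ _).trans <| by
    simpa using sum_le_card_nsmul s _ 1 fun j _ => natDegree_X_sub_C_le (v j)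

theorem reflect_nodal (s : Finset ι) (v : ι → R) :
    reflect #s (nodal s v) = ∏ j ∈ s, (1 - C (v j) * X) := by
  classical
  induction s using Finset.cons_induction with
  | empty => simp
  | cons a s ha ih =>
    rw [nodal_eq, prod_cons, prod_cons, card_cons, add_comm, ← nodal_eq,
      reflect_mul _ _ (natDegree_X_sub_C_le _) (natDegree_nodal_le s v), reflect_X_sub_C, ih]

theorem eval_nodal_const_mul_node [DecidableEq ι] {s : Finset ι} {i : ι} (hi : i ∈ s)
    (x : ι → R) (t : R) :
    (nodal s x).eval (t * x i) = (t - 1) * x i * ∏ j ∈ s.erase i, (t * x i - x j) := by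
  rw [nodal_eq_mul_nodal_erase hi, eval_mul, eval_nodal]
  simp only [eval_sub, eval_X, eval_C]
  ring

end CommRing

variable {F ι : Type*} [Field F] [DecidableEq ι] {s : Finset ι} {v : ι → F}

theorem nodal_eq_nodal_add_sum_nodal_erase (hvs : Set.InjOn v s) (u : ι → F) :
    nodal s u = nodal s v + ∑ i ∈ s,
      C (eval (v i) (nodal s u) * nodalWeight s v i) * nodal (s.erase i) v := by
  have hdeg : (nodal s u - nodal s v).degree < #s := by
    rw [← degree_nodal (s := s) (v := u)]
    exact degree_sub_lt_left (degree_nodal.trans degree_nodal.symm) nodal_ne_zero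
      (nodal_monic.leadingCoeff.trans nodal_monic.leadingCoeff.symm)
  rw [← sub_eq_iff_eq_add', eq_interpolate hvs hdeg,
    interpolate_eq_nodalWeight_mul_nodal_div_X_sub_C]
  refine sum_congr rfl fun i hi => ?_
  rw [eval_sub, eval_nodal_at_node hi, sub_zero, ← nodal_erase_eq_nodal_div hi, C_mul]
  ring

theorem prod_one_sub_C_mul_X_eq_add_X_mul_sum (hvs : Set.InjOn v s) (u : ι → F) :
    ∏ j ∈ s, (1 - C (u j) * X) = ∏ j ∈ s, (1 - C (v j) * X) + X * ∑ i ∈ s,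
      C (eval (v i) (nodal s u) * nodalWeight s v i) * ∏ j ∈ s.erase i, (1 - C (v j) * X) := by
  have h := congrArg (reflect #s) (nodal_eq_nodal_add_sum_nodal_erase hvs u)
  rw [reflect_nodal, reflect_add, reflect_nodal, reflect_sum] at h
  rw [h, mul_sum]
  refine congrArg _ (sum_congr rfl fun i hi => ?_)
  rw [reflect_C_mul, ← card_erase_add_one hi, ← mul_one (nodal _ v),
    reflect_mul _ _ (natDegree_nodal_le _ v) (natDegree_one.trans_le zero_le_one), reflect_nodal,
    reflect_one, pow_one]
  ring

theorem nodalWeight_const_mul (x : ι → F) (t : F) (i : ι) :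
    nodalWeight s (fun j => t * x j) i = (t ^ #(s.erase i))⁻¹ * nodalWeight s x i := by
  simp only [nodalWeight, ← mul_sub, mul_inv, prod_mul_distrib, prod_const, inv_pow]

end Polynomial

namespace PowerSeries

variable {F : Type*} [Field F]

theorem coeff_inv_one_sub_C_mul_X (a : F) (n : ℕ) : coeff n (1 - C a * X)⁻¹ = a ^ n := by
  have h : (mk fun n => a ^ n) * (1 - C a * X) = 1 := by
    simpa [rescale_mk] using congrArg (rescale a) (mk_one_mul_one_sub_eq_one F)
  rw [← (eq_inv_iff_mul_eq_one (by simp)).2 h, coeff_mk]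

variable {ι : Type*} [DecidableEq ι] {s : Finset ι} {v : ι → F}

theorem prod_erase_mul_inv_prod {i : ι} (hi : i ∈ s) :
    (∏ j ∈ s.erase i, (1 - C (v j) * X)) * (∏ j ∈ s, (1 - C (v j) * X))⁻¹
      = (1 - C (v i) * X)⁻¹ := by
  rw [← Finset.mul_prod_erase s _ hi, PowerSeries.mul_inv_rev, ← mul_assoc,
    PowerSeries.mul_inv_cancel _ (by simp [map_prod]), one_mul]

theorem coeff_succ_prod_mul_inv_prod (hvs : Set.InjOn v s) (u : ι → F) (n : ℕ) :
    coeff (n + 1) ((∏ j ∈ s, (1 - C (u j) * X)) * (∏ j ∈ s, (1 - C (v j) * X))⁻¹)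
      = ∑ i ∈ s, (Lagrange.nodal s u).eval (v i) * Lagrange.nodalWeight s v i * v i ^ n := by
  have key := congrArg Polynomial.coeToPowerSeries.ringHom
    (Polynomial.prod_one_sub_C_mul_X_eq_add_X_mul_sum hvs u)
  simp only [map_prod, map_add, map_mul, map_sum, map_sub, map_one,
    Polynomial.coeToPowerSeries.ringHom_apply, Polynomial.coe_C, Polynomial.coe_X] at key
  rw [key, add_mul, PowerSeries.mul_inv_cancel _ (by simp [map_prod]),
    mul_assoc, Finset.sum_mul, map_add, coeff_one, if_neg n.succ_ne_zero, zero_add,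
    coeff_succ_X_mul, map_sum]
  refine Finset.sum_congr rfl fun i hi => ?_
  rw [mul_assoc, prod_erase_mul_inv_prod hi, ← map_mul, coeff_C_mul, coeff_inv_one_sub_C_mul_X]

end PowerSeries

open Finset Lagrange PowerSeries

theorem sum_weights_pow_eq_general {F : Type*} [Field F] {N : ℕ}
    (t : F) (ht0 : t ≠ 0) (ht1 : t ≠ 1) (x : Fin N → F) (hx : Function.Injective x)
    (n : ℕ) (hn : 1 ≤ n) :
    ∑ i : Fin N,
        (∏ j ∈ Finset.univ.erase i, (t * x i - x j) / (x i - x j)) * x i ^ n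
      = t ^ N / (t ^ n * (t - 1)) *
          PowerSeries.coeff (R := F) n
            ((∏ i : Fin N, (1 - PowerSeries.C (R := F) (x i) * PowerSeries.X)) *
              (∏ i : Fin N, (1 - PowerSeries.C (R := F) (t * x i) * PowerSeries.X))⁻¹) := by
  obtain ⟨m, rfl⟩ : ∃ m, n = m + 1 := ⟨n - 1, by omega⟩
  have hinj : Set.InjOn (fun j => t * x j) (univ : Finset (Fin N)) :=
    fun i _ j _ h => hx (mul_left_cancel₀ ht0 h)
  rw [coeff_succ_prod_mul_inv_prod hinj x m, mul_sum]
  refine sum_congr rfl fun i _ => ?_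
  have hA : ∏ j ∈ univ.erase i, (t * x i - x j) / (x i - x j)
      = (∏ j ∈ univ.erase i, (t * x i - x j)) * nodalWeight univ x i := by
    simp only [div_eq_mul_inv, prod_mul_distrib, nodalWeight]
  have htN : t ^ N = t ^ #(univ.erase i) * t := by
    rw [← pow_succ, card_erase_add_one (mem_univ i), card_univ, Fintype.card_fin]
  have ht1' : t - 1 ≠ 0 := sub_ne_zero.2 ht1
  rw [hA, Polynomial.eval_nodal_const_mul_node (mem_univ i), Polynomial.nodalWeight_const_mul, htN]
  field_simp
  ring

/-- Let `F` be a field, `N` a positive integer, `t ∈ F` with `t ≠ 0` and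
`t ≠ 1`, and `x₁, …, x_N` pairwise distinct elements of `F`.  With
`A_i = ∏_{j ≠ i} (t·x_i − x_j)/(x_i − x_j)` and `F_n` the coefficient of `zⁿ` in
`F(z) = ∏_{i=1}^N (1 − z·x_i) · ∏_{i=1}^N (1 − t·z·x_i)⁻¹ ∈ F[[z]]`, one has, for every
`n ≥ 1`:  `∑_{i=1}^N A_i · x_iⁿ = (t^N/(tⁿ·(t − 1))) · F_n`. -/
theorem sum_weights_pow_eq {F : Type*} [Field F] {N : ℕ} (hN : 0 < N)
    (t : F) (ht0 : t ≠ 0) (ht1 : t ≠ 1) (x : Fin N → F) (hx : Function.Injective x)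
    (n : ℕ) (hn : 1 ≤ n) :
    ∑ i : Fin N,
        (∏ j ∈ Finset.univ.erase i, (t * x i - x j) / (x i - x j)) * x i ^ n
      = t ^ N / (t ^ n * (t - 1)) *
          PowerSeries.coeff (R := F) n
            ((∏ i : Fin N, (1 - PowerSeries.C (R := F) (x i) * PowerSeries.X)) *
              (∏ i : Fin N, (1 - PowerSeries.C (R := F) (t * x i) * PowerSeries.X))⁻¹) :=
  sum_weights_pow_eq_general t ht0 ht1 x hx n hn
end

section
/- Let a be an m/n Tesler matrix. Then for every 1 ≤ k ≤ n the partial diagonal sum satisfies ∑_{i=1}^{k} a(i,i) ≤ ⌊k·m/n⌋, and moreover the full diagonal sum satisfies ∑_{i=1}^{n} a(i,i) = m. -/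
/-- An `m/n` Tesler matrix: a family `a(i,j)` of nonnegative integers (given here as a
function `ℕ → ℕ → ℕ`, relevant for indices `1 ≤ i ≤ j ≤ n`) such that, as integers,
`a(i,i) + ∑_{j=i+1}^n a(i,j) − ∑_{j=1}^{i−1} a(j,i) = S_{m/n}(i)` for every `1 ≤ i ≤ n`,
where `S_{m/n}(i) = ⌊i·m/n⌋ − ⌊(i−1)·m/n⌋`. -/
def IsTesler (m n : ℕ) (a : ℕ → ℕ → ℕ) : Prop :=
  ∀ i, 1 ≤ i → i ≤ n →
    (a i i : ℤ) + ∑ j ∈ Finset.Icc (i + 1) n, (a i j : ℤ)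
        - ∑ j ∈ Finset.Icc 1 (i - 1), (a j i : ℤ)
      = ((i * m / n : ℕ) : ℤ) - (((i - 1) * m / n : ℕ) : ℤ)

lemma tesler_tele (m n k : ℕ) :
    ∑ i ∈ Finset.Icc 1 k, (((i * m / n : ℕ) : ℤ) - (((i - 1) * m / n : ℕ) : ℤ))
      = ((k * m / n : ℕ) : ℤ) := by
  induction k with
  | zero => simp
  | succ k ih =>
    rw [Finset.sum_Icc_succ_top (by omega), ih]
    simp [Nat.add_sub_cancel]

lemma tesler_swap (a : ℕ → ℕ → ℕ) (k : ℕ) :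
    ∑ i ∈ Finset.Icc 1 k, ∑ j ∈ Finset.Icc 1 (i - 1), (a j i : ℤ)
      = ∑ i ∈ Finset.Icc 1 k, ∑ j ∈ Finset.Icc (i + 1) k, (a i j : ℤ) := by
  have h1 : ∀ i ∈ Finset.Icc 1 k, (Finset.Icc 1 (i - 1)) = Finset.Ico 1 i := by
    intro i hi
    simp only [Finset.mem_Icc] at hi
    rw [← Finset.Ico_add_one_right_eq_Icc]
    congr 1
    omega
  have h2 : ∀ i ∈ Finset.Icc 1 k, Finset.Icc (i + 1) k = Finset.Ico (i + 1) (k + 1) := by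
    intro i _; rw [Finset.Ico_add_one_right_eq_Icc]
  calc ∑ i ∈ Finset.Icc 1 k, ∑ j ∈ Finset.Icc 1 (i - 1), (a j i : ℤ)
      = ∑ i ∈ Finset.Ico 1 (k + 1), ∑ j ∈ Finset.Ico 1 i, (a j i : ℤ) := by
        rw [Finset.Ico_add_one_right_eq_Icc]
        exact Finset.sum_congr rfl fun i hi => by rw [h1 i hi]
    _ = ∑ i ∈ Finset.Ico 1 (k + 1), ∑ j ∈ Finset.Ico (i + 1) (k + 1), (a i j : ℤ) :=
        (Finset.sum_Ico_Ico_comm' 1 (k + 1) (fun i j => (a i j : ℤ))).symm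
    _ = ∑ i ∈ Finset.Icc 1 k, ∑ j ∈ Finset.Icc (i + 1) k, (a i j : ℤ) := by
        rw [Finset.Ico_add_one_right_eq_Icc]
        exact Finset.sum_congr rfl fun i hi => by rw [(h2 i hi).symm]

lemma tesler_main (m n : ℕ) (a : ℕ → ℕ → ℕ) (ha : IsTesler m n a) (k : ℕ)
    (hk1 : 1 ≤ k) (hkn : k ≤ n) :
    ∑ i ∈ Finset.Icc 1 k, (a i i : ℤ)
      + (∑ i ∈ Finset.Icc 1 k, ∑ j ∈ Finset.Icc (i + 1) n, (a i j : ℤ)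
         - ∑ i ∈ Finset.Icc 1 k, ∑ j ∈ Finset.Icc (i + 1) k, (a i j : ℤ))
      = ((k * m / n : ℕ) : ℤ) := by
  have hsum : ∑ i ∈ Finset.Icc 1 k,
      ((a i i : ℤ) + ∑ j ∈ Finset.Icc (i + 1) n, (a i j : ℤ)
        - ∑ j ∈ Finset.Icc 1 (i - 1), (a j i : ℤ))
      = ((k * m / n : ℕ) : ℤ) := by
    rw [Finset.sum_congr rfl (fun i hi => by
      simp only [Finset.mem_Icc] at hi
      exact ha i hi.1 (le_trans hi.2 hkn)), tesler_tele]
  rw [← hsum, Finset.sum_sub_distrib, Finset.sum_add_distrib, tesler_swap]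
  ring

/-- Let `m, n` be coprime positive integers and `a` an `m/n` Tesler
matrix.  Then for every `1 ≤ k ≤ n` one has `∑_{i=1}^k a(i,i) ≤ ⌊k·m/n⌋`, and the full
diagonal sum satisfies `∑_{i=1}^n a(i,i) = m`. -/
theorem tesler_diagonal_sums (m n : ℕ) (hm : 0 < m) (hn : 0 < n)
    (hco : Nat.Coprime m n) (a : ℕ → ℕ → ℕ) (ha : IsTesler m n a) :
    (∀ k, 1 ≤ k → k ≤ n → ∑ i ∈ Finset.Icc 1 k, a i i ≤ k * m / n) ∧
      ∑ i ∈ Finset.Icc 1 n, a i i = m := by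
  have key : ∀ k, 1 ≤ k → k ≤ n →
      ∑ i ∈ Finset.Icc 1 k, (a i i : ℤ) ≤ ((k * m / n : ℕ) : ℤ) := by
    intro k hk1 hkn
    have h := tesler_main m n a ha k hk1 hkn
    have hle : ∑ i ∈ Finset.Icc 1 k, ∑ j ∈ Finset.Icc (i + 1) k, (a i j : ℤ)
        ≤ ∑ i ∈ Finset.Icc 1 k, ∑ j ∈ Finset.Icc (i + 1) n, (a i j : ℤ) := by
      apply Finset.sum_le_sum
      intro i _
      apply Finset.sum_le_sum_of_subset_of_nonneg
      · exact Finset.Icc_subset_Icc_right hkn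
      · intro j _ _; positivity
    omega
  constructor
  · intro k hk1 hkn
    have := key k hk1 hkn
    exact_mod_cast this
  · have h := tesler_main m n a ha n hn le_rfl
    simp only [sub_self, add_zero] at h
    rw [Nat.mul_div_cancel_left m hn] at h
    exact_mod_cast h
end

section
/- The map sending a quasi-diagonal m/n Tesler matrix a to its diagonal (a(1,1), a(2,2), …, a(n,n)) is a bijection from the set of quasi-diagonal m/n Tesler matrices onto the set D_{m/n} of tuples (d_1, …, d_n) of nonnegative integers satisfying d_1 + … + d_k ≤ ⌊k·m/n⌋ for every 1 ≤ k ≤ n−1 and d_1 + … + d_n = m. (The set D_{m/n} encodes the m/n Dyck paths, i.e. lattice paths in an m × n rectangle staying below the diagonal, via their horizontal runs.) -/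
/-- An `m/n` Tesler matrix: a family `a(i,j)` of nonnegative integers indexed by
`1 ≤ i ≤ j ≤ n` (encoded as a function `ℕ → ℕ → ℕ` vanishing outside that index range)
such that, as integers,
`a(i,i) + ∑_{j=i+1}^n a(i,j) − ∑_{j=1}^{i−1} a(j,i) = S_{m/n}(i)` for every `1 ≤ i ≤ n`,
where `S_{m/n}(i) = ⌊i·m/n⌋ − ⌊(i−1)·m/n⌋`.  It is quasi-diagonal if moreover
`a(i,j) = 0` whenever `j > i + 1`. -/
def IsQDTesler (m n : ℕ) (a : ℕ → ℕ → ℕ) : Prop :=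
  (∀ i j, a i j ≠ 0 → 1 ≤ i ∧ i ≤ j ∧ j ≤ n) ∧
    (∀ i, 1 ≤ i → i ≤ n →
      (a i i : ℤ) + ∑ j ∈ Finset.Icc (i + 1) n, (a i j : ℤ)
          - ∑ j ∈ Finset.Icc 1 (i - 1), (a j i : ℤ)
        = ((i * m / n : ℕ) : ℤ) - (((i - 1) * m / n : ℕ) : ℤ)) ∧
    (∀ i j, i + 1 < j → a i j = 0)

/-- The set `D_{m/n}`: tuples `(d_1, …, d_n)` of nonnegative integers (encoded as a
function `ℕ → ℕ` vanishing outside `{1, …, n}`) with `d_1 + ⋯ + d_k ≤ ⌊k·m/n⌋` for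
`1 ≤ k ≤ n − 1` and `d_1 + ⋯ + d_n = m`; these encode the `m/n` Dyck paths via their
horizontal runs. -/
def IsDyckSeq (m n : ℕ) (d : ℕ → ℕ) : Prop :=
  (∀ i, d i ≠ 0 → 1 ≤ i ∧ i ≤ n) ∧
    (∀ k, 1 ≤ k → k ≤ n - 1 → ∑ i ∈ Finset.Icc 1 k, d i ≤ k * m / n) ∧
    ∑ i ∈ Finset.Icc 1 n, d i = m

/-- The inverse construction: from a Dyck sequence `d`, build the quasi-diagonal
Tesler matrix with diagonal `d` and superdiagonal `b_i = ⌊im/n⌋ - (d_1+⋯+d_i)`. -/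
def gmat (m n : ℕ) (d : ℕ → ℕ) (i j : ℕ) : ℕ :=
  if j = i then d i
  else if j = i + 1 ∧ 1 ≤ i ∧ j ≤ n then i * m / n - ∑ k ∈ Finset.Icc 1 i, d k
  else 0

lemma sup_eq (m n : ℕ) (a : ℕ → ℕ → ℕ) (h : IsQDTesler m n a) :
    ∀ i, i ≤ n → (a i (i + 1) : ℤ)
      = ((i * m / n : ℕ) : ℤ) - ∑ k ∈ Finset.Icc 1 i, (a k k : ℤ) := by
  obtain ⟨hsupp, heq, hqd⟩ := h
  have hz : ∀ i j, ¬(1 ≤ i ∧ i ≤ j ∧ j ≤ n) → a i j = 0 := by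
    intro i j hij; by_contra hne; exact hij (hsupp i j hne)
  intro i
  induction i with
  | zero =>
    intro _
    simp [hz 0 1 (by omega)]
  | succ i ih =>
    intro hin
    have hprev : (a i (i + 1) : ℤ)
        = ((i * m / n : ℕ) : ℤ) - ∑ k ∈ Finset.Icc 1 i, (a k k : ℤ) := ih (by omega)
    have he := heq (i + 1) (by omega) hin
    simp only [Nat.add_sub_cancel] at he
    have h1 : ∑ j ∈ Finset.Icc (i + 1 + 1) n, (a (i + 1) j : ℤ) = (a (i + 1) (i + 2) : ℤ) := by
      rw [Finset.sum_eq_single (i + 2)]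
      · intro b hb hne
        simp only [Finset.mem_Icc] at hb
        exact_mod_cast hqd (i + 1) b (by omega)
      · intro hnot
        simp only [Finset.mem_Icc, not_and, not_le] at hnot
        exact_mod_cast hz (i + 1) (i + 2) (by omega)
    have h2 : ∑ j ∈ Finset.Icc 1 i, (a j (i + 1) : ℤ) = (a i (i + 1) : ℤ) := by
      rw [Finset.sum_eq_single i]
      · intro b hb hne
        simp only [Finset.mem_Icc] at hb
        exact_mod_cast hqd b (i + 1) (by omega)
      · intro hnot
        simp only [Finset.mem_Icc, not_and, not_le] at hnot
        have : i = 0 := by omega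
        subst this
        exact_mod_cast hz 0 1 (by omega)
    rw [h1, h2] at he
    have e2 : i + 1 + 1 = i + 2 := by omega
    rw [e2, Finset.sum_Icc_succ_top (by omega : 1 ≤ i + 1)]
    linarith [he, hprev]

lemma gmat_tesler (m n : ℕ) (hn : 0 < n) (d : ℕ → ℕ) (hd : IsDyckSeq m n d) :
    IsQDTesler m n (gmat m n d) := by
  obtain ⟨hsup, hpart, htot⟩ := hd
  have hle : ∀ k, 1 ≤ k → k ≤ n → ∑ i ∈ Finset.Icc 1 k, d i ≤ k * m / n := by
    intro k hk1 hkn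
    by_cases hk : k = n
    · subst hk
      rw [Nat.mul_div_cancel_left m hn]
      exact htot.le
    · exact hpart k hk1 (by omega)
  -- cast value of the superdiagonal, valid for all i ≤ n
  have gcast : ∀ i, i ≤ n → (gmat m n d i (i + 1) : ℤ)
      = ((i * m / n : ℕ) : ℤ) - ∑ k ∈ Finset.Icc 1 i, (d k : ℤ) := by
    intro i hi
    rcases Nat.eq_zero_or_pos i with rfl | hi1
    · simp [gmat]
    by_cases hin : i = n
    · have hg : gmat m n d i (i + 1) = 0 := by
        unfold gmat
        rw [if_neg (by omega), if_neg (by rintro ⟨-, -, h⟩; omega)]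
      have hdiv : i * m / n = m := by rw [hin, Nat.mul_div_cancel_left m hn]
      have hs : ∑ k ∈ Finset.Icc 1 i, (d k : ℤ) = ((m : ℕ) : ℤ) := by
        rw [hin, ← htot]; push_cast; ring
      rw [hg, hdiv, hs]; simp
    · have hlt : i < n := by omega
      have hg : gmat m n d i (i + 1) = i * m / n - ∑ k ∈ Finset.Icc 1 i, d k := by
        unfold gmat
        rw [if_neg (by omega), if_pos ⟨rfl, hi1, by omega⟩]
      rw [hg, Nat.cast_sub (hle i hi1 hi)]
      push_cast; ring
  refine ⟨?_, ?_, ?_⟩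
  · intro i j hne
    unfold gmat at hne
    split_ifs at hne with h1 h2
    · obtain ⟨ha1, ha2⟩ := hsup i hne
      exact ⟨ha1, h1.ge, h1.le.trans ha2⟩
    · obtain ⟨hj, hi, hjn⟩ := h2
      exact ⟨hi, by omega, hjn⟩
    · exact absurd rfl hne
  · intro i hi1 hin
    obtain ⟨t, rfl⟩ : ∃ t, i = t + 1 := ⟨i - 1, by omega⟩
    simp only [Nat.add_sub_cancel]
    have hdiag : gmat m n d (t + 1) (t + 1) = d (t + 1) := by
      unfold gmat; rw [if_pos rfl]
    have h1 : ∑ j ∈ Finset.Icc (t + 1 + 1) n, (gmat m n d (t + 1) j : ℤ)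
        = (gmat m n d (t + 1) (t + 2) : ℤ) := by
      rw [Finset.sum_eq_single (t + 2)]
      · intro b hb hne
        simp only [Finset.mem_Icc] at hb
        have : gmat m n d (t + 1) b = 0 := by
          unfold gmat
          rw [if_neg (by omega), if_neg (by rintro ⟨h, -, -⟩; omega)]
        exact_mod_cast this
      · intro hnot
        simp only [Finset.mem_Icc, not_and, not_le] at hnot
        have : gmat m n d (t + 1) (t + 2) = 0 := by
          unfold gmat
          rw [if_neg (by omega), if_neg (by rintro ⟨-, -, h⟩; omega)]
        exact_mod_cast this
    have h2 : ∑ j ∈ Finset.Icc 1 t, (gmat m n d j (t + 1) : ℤ)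
        = (gmat m n d t (t + 1) : ℤ) := by
      rw [Finset.sum_eq_single t]
      · intro b hb hne
        simp only [Finset.mem_Icc] at hb
        have : gmat m n d b (t + 1) = 0 := by
          unfold gmat
          rw [if_neg (by omega), if_neg (by rintro ⟨h, -, -⟩; omega)]
        exact_mod_cast this
      · intro hnot
        simp only [Finset.mem_Icc, not_and, not_le] at hnot
        have ht0 : t = 0 := by omega
        subst ht0
        have : gmat m n d 0 1 = 0 := by
          unfold gmat
          rw [if_neg (by omega), if_neg (by rintro ⟨-, h, -⟩; omega)]
        exact_mod_cast this
    rw [hdiag, h1, h2, gcast (t + 1) hin, gcast t (by omega),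
      Finset.sum_Icc_succ_top (by omega : 1 ≤ t + 1)]
    push_cast
    ring
  · intro i j hij
    unfold gmat
    rw [if_neg (by omega), if_neg (by rintro ⟨h, -, -⟩; omega)]

lemma diag_dyck (m n : ℕ) (hn : 0 < n) (a : ℕ → ℕ → ℕ) (h : IsQDTesler m n a) :
    IsDyckSeq m n (fun i => a i i) := by
  have hz : ∀ i j, ¬(1 ≤ i ∧ i ≤ j ∧ j ≤ n) → a i j = 0 := by
    intro i j hij; by_contra hne; exact hij (h.1 i j hne)
  refine ⟨?_, ?_, ?_⟩
  · intro i hi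
    obtain ⟨h1, _, h2⟩ := h.1 i i hi
    exact ⟨h1, h2⟩
  · intro k hk1 hkn
    have hs := sup_eq m n a h k (by omega)
    have hnn : (0 : ℤ) ≤ (a k (k + 1) : ℤ) := by positivity
    have : (∑ i ∈ Finset.Icc 1 k, (a i i : ℤ)) ≤ ((k * m / n : ℕ) : ℤ) := by linarith
    have hcast : ((∑ i ∈ Finset.Icc 1 k, a i i : ℕ) : ℤ)
        = ∑ i ∈ Finset.Icc 1 k, (a i i : ℤ) := by push_cast; ring
    rw [← hcast] at this
    exact_mod_cast this
  · have hs := sup_eq m n a h n (le_refl n)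
    have hzero : a n (n + 1) = 0 := hz n (n + 1) (by omega)
    rw [hzero] at hs
    have hcast : ((∑ i ∈ Finset.Icc 1 n, a i i : ℕ) : ℤ)
        = ∑ i ∈ Finset.Icc 1 n, (a i i : ℤ) := by push_cast; ring
    have : ((∑ i ∈ Finset.Icc 1 n, a i i : ℕ) : ℤ) = ((n * m / n : ℕ) : ℤ) := by
      rw [hcast]; push_cast at hs ⊢; linarith
    have := Nat.cast_injective this
    rw [this, Nat.mul_div_cancel_left m hn]

lemma gmat_diag_eq (m n : ℕ) (a : ℕ → ℕ → ℕ) (h : IsQDTesler m n a) :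
    gmat m n (fun i => a i i) = a := by
  obtain ⟨hsupp, heq, hqd⟩ := h
  have hz : ∀ i j, ¬(1 ≤ i ∧ i ≤ j ∧ j ≤ n) → a i j = 0 := by
    intro i j hij; by_contra hne; exact hij (hsupp i j hne)
  funext i j
  unfold gmat
  split_ifs with h1 h2
  · subst h1; rfl
  · obtain ⟨hji, h1i, hjn⟩ := h2
    subst hji
    have hs := sup_eq m n a ⟨hsupp, heq, hqd⟩ i (by omega)
    have hcast : ((∑ k ∈ Finset.Icc 1 i, a k k : ℕ) : ℤ)
        = ∑ k ∈ Finset.Icc 1 i, (a k k : ℤ) := by push_cast; ring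
    rw [← hcast] at hs
    have hbeta : ∑ k ∈ Finset.Icc 1 i, (fun i => a i i) k = ∑ k ∈ Finset.Icc 1 i, a k k := rfl
    rw [hbeta]
    omega
  · symm
    by_cases hji : j = i + 1
    · subst hji
      refine hz i (i + 1) ?_
      rintro ⟨ha, hb, hc⟩
      exact h2 ⟨rfl, ha, hc⟩
    · rcases lt_trichotomy j i with hlt | heq' | hgt
      · exact hz i j (by omega)
      · exact absurd heq' h1
      · exact hqd i j (by omega)

/-- Let `m, n` be coprime positive integers.  The map sending a
quasi-diagonal `m/n` Tesler matrix `a` to its diagonal `(a(1,1), …, a(n,n))` is a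
bijection from the set of quasi-diagonal `m/n` Tesler matrices onto `D_{m/n}`. -/
theorem qdTesler_diag_bijection (m n : ℕ) (hm : 0 < m) (hn : 0 < n)
    (hco : Nat.Coprime m n) :
    ∃ f : {a : ℕ → ℕ → ℕ // IsQDTesler m n a} ≃ {d : ℕ → ℕ // IsDyckSeq m n d},
      ∀ a : {a : ℕ → ℕ → ℕ // IsQDTesler m n a}, (f a).1 = fun i => a.1 i i := by
  refine ⟨⟨fun a => ⟨fun i => a.1 i i, diag_dyck m n hn a.1 a.2⟩,
           fun d => ⟨gmat m n d.1, gmat_tesler m n hn d.1 d.2⟩, ?_, ?_⟩,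
          fun a => rfl⟩
  · intro a
    exact Subtype.ext (gmat_diag_eq m n a.1 a.2)
  · intro d
    refine Subtype.ext (funext fun i => ?_)
    show gmat m n d.1 i i = d.1 i
    unfold gmat
    rw [if_pos rfl]
end

section
/- Fix coprime positive integers m and n. In the polynomial ring ℤ[q,u] the following identity holds: ∑_{a} q^{ ∑_{i=1}^{n−1} a(i,i+1) } · (1 − u)^{ #\{1 ≤ i ≤ n : a(i,i) > 0\} } = ∑_{d ∈ D_{m/n}} q^{ (m−1)(n−1)/2 − ∑_{k=1}^{n−1} (d_1 + … + d_k) } · (1 − u)^{ #\{1 ≤ i ≤ n : d_i > 0\} }, where the left-hand sum is over all quasi-diagonal m/n Tesler matrices a, the right-hand sum is over all tuples d = (d_1,…,d_n) of nonnegative integers satisfying d_1 + … + d_k ≤ ⌊k·m/n⌋ for every 1 ≤ k ≤ n−1 and d_1 + … + d_n = m, and all the exponents of q appearing on both sides are nonnegative integers. (This is the combinatorial content of the specialization at t = 1 of the Tesler-matrix formula for the refined torus knot invariant, identifying it with the rational q,t-Catalan/Schröder sum over m/n Dyck paths: d encodes the horizontal runs of a Dyck path, the q-exponent is δ_{m,n}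 minus its area statistic, and the indices i with d_i > 0 are its corners.) -/
/-- Reflection identity for floors with coprime `m, n`. -/
lemma qd_floor_reflect {m n k : ℕ} (hm : 0 < m) (hco : Nat.Coprime m n)
    (hk : 1 ≤ k) (hkn : k < n) : k * m / n + (n - k) * m / n + 1 = m := by
  have hn : 0 < n := lt_of_le_of_lt (Nat.zero_le k) hkn
  have hd := Nat.div_add_mod (k * m) n
  set q := k * m / n with hq
  set r := k * m % n with hr
  have hr1 : 0 < r := by
    rcases Nat.eq_zero_or_pos r with h | h
    · exfalso
      have hdvd : n ∣ k * m := Nat.dvd_of_mod_eq_zero (hr ▸ h)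
      have : n ∣ k := (Nat.Coprime.dvd_of_dvd_mul_right (Nat.Coprime.symm hco) hdvd)
      have := Nat.le_of_dvd (by omega) this
      omega
    · exact h
  have hrn : r < n := Nat.mod_lt _ hn
  have hqm : q < m := by
    rw [hq, Nat.div_lt_iff_lt_mul hn]
    calc k * m < n * m := by exact (Nat.mul_lt_mul_right hm).mpr hkn
    _ = m * n := Nat.mul_comm n m
  have hA : (n - k) * m + k * m = n * m := by
    rw [← Nat.add_mul, Nat.sub_add_cancel hkn.le]
  have key : (n - k) * m / n = m - q - 1 := by
    apply Nat.div_eq_of_lt_le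
    · have e1 : (m - q - 1) * n = m * n - q * n - n := by
        rw [Nat.sub_mul, Nat.sub_mul, one_mul]
      have e3 : q * n = n * q := Nat.mul_comm _ _
      have e4 : m * n = n * m := Nat.mul_comm _ _
      omega
    · have e2 : (m - q - 1 + 1) * n = m * n - q * n - n + n := by
        rw [Nat.add_mul, Nat.sub_mul, Nat.sub_mul, one_mul]
      have e3 : q * n = n * q := Nat.mul_comm _ _
      have e4 : m * n = n * m := Nat.mul_comm _ _
      omega
  omega

/-- `∑_{k=1}^{n-1} ⌊km/n⌋ = (m-1)(n-1)/2` for coprime `m, n`. -/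
lemma qd_sum_floor {m n : ℕ} (hm : 0 < m) (hn : 0 < n) (hco : Nat.Coprime m n) :
    ∑ k ∈ Finset.Icc 1 (n - 1), k * m / n = (m - 1) * (n - 1) / 2 := by
  have reflect : ∑ k ∈ Finset.Icc 1 (n - 1), (n - k) * m / n
      = ∑ k ∈ Finset.Icc 1 (n - 1), k * m / n := by
    apply Finset.sum_nbij' (fun k => n - k) (fun k => n - k) <;>
      intro a ha <;> simp only [Finset.mem_Icc] at * <;> omega
  have h2 : 2 * (∑ k ∈ Finset.Icc 1 (n - 1), k * m / n) = (m - 1) * (n - 1) := by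
    have : 2 * (∑ k ∈ Finset.Icc 1 (n - 1), k * m / n)
        = ∑ k ∈ Finset.Icc 1 (n - 1), (k * m / n + (n - k) * m / n) := by
      rw [Finset.sum_add_distrib, reflect]; ring
    rw [this]
    have : ∑ k ∈ Finset.Icc 1 (n - 1), (k * m / n + (n - k) * m / n)
        = ∑ _k ∈ Finset.Icc 1 (n - 1), (m - 1) := by
      apply Finset.sum_congr rfl
      intro k hk
      simp only [Finset.mem_Icc] at hk
      have := qd_floor_reflect hm hco hk.1 (by omega : k < n)
      omega
    rw [this, Finset.sum_const, Nat.card_Icc, smul_eq_mul]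
    have : n - 1 + 1 - 1 = n - 1 := by omega
    rw [this, Nat.mul_comm]
  omega


/-- The partial-sum identity for a quasi-diagonal Tesler matrix. -/
lemma qd_partial {m n : ℕ} (hn : 0 < n) {a : ℕ → ℕ → ℕ} (h : IsQDTesler m n a) :
    ∀ k, k ≤ n → (∑ i ∈ Finset.Icc 1 k, a i i) + (∑ j ∈ Finset.Icc (k + 1) n, a k j)
      = k * m / n := by
  obtain ⟨hsupp, heq, hqd⟩ := h
  have hzero : ∀ j, a 0 j = 0 := fun j => by
    by_contra hne; exact absurd (hsupp 0 j hne).1 (by omega)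
  intro k
  induction k with
  | zero =>
    intro _
    simp [Finset.sum_congr rfl fun j _ => hzero j]
  | succ k ih =>
    intro hk1
    have ihv := ih (by omega)
    have E := heq (k + 1) (by omega) hk1
    have hsimp1 : ∑ j ∈ Finset.Icc 1 (k + 1 - 1), (a j (k + 1) : ℤ) = (a k (k + 1) : ℤ) := by
      rcases Nat.eq_zero_or_pos k with hk0 | hk0
      · subst hk0
        simp [hzero 1]
      · have : k + 1 - 1 = k := by omega
        rw [this]
        apply Finset.sum_eq_single_of_mem k (by simp [Finset.mem_Icc]; omega)
        intro j hj hne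
        simp only [Finset.mem_Icc] at hj
        have : a j (k + 1) = 0 := hqd j (k + 1) (by omega)
        simp [this]
    have hsimp2 : ∑ j ∈ Finset.Icc (k + 1 + 1) n, (a (k + 1) j : ℤ)
        = ((∑ j ∈ Finset.Icc (k + 2) n, a (k + 1) j : ℕ) : ℤ) := by push_cast; rfl
    have hsingle : ∑ j ∈ Finset.Icc (k + 1) n, a k j = a k (k + 1) := by
      apply Finset.sum_eq_single_of_mem (k + 1) (by simp [Finset.mem_Icc]; omega)
      intro j hj hne
      simp only [Finset.mem_Icc] at hj
      exact hqd k j (by omega)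
    have hsum : ∑ i ∈ Finset.Icc 1 (k + 1), a i i
        = (∑ i ∈ Finset.Icc 1 k, a i i) + a (k + 1) (k + 1) :=
      Finset.sum_Icc_succ_top (by omega) _
    rw [hsingle] at ihv
    rw [hsimp1, hsimp2] at E
    have hm1 : (k + 1 - 1) = k := by omega
    rw [hm1] at E
    -- now pure arithmetic
    have goalZ : ((∑ i ∈ Finset.Icc 1 (k + 1), a i i : ℕ) : ℤ)
        + ((∑ j ∈ Finset.Icc (k + 1 + 1) n, a (k + 1) j : ℕ) : ℤ)
        = (((k + 1) * m / n : ℕ) : ℤ) := by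
      rw [hsum]
      push_cast
      push_cast at E
      have : ((k + 2 : ℕ) : ℕ) = k + 1 + 1 := by omega
      rw [show Finset.Icc (k + 2) n = Finset.Icc (k + 1 + 1) n by norm_num] at E
      have ihZ : ((∑ i ∈ Finset.Icc 1 k, a i i : ℕ) : ℤ) + (a k (k + 1) : ℤ)
          = ((k * m / n : ℕ) : ℤ) := by exact_mod_cast ihv
      push_cast at ihZ
      linarith
    exact_mod_cast goalZ

/-- The diagonal of a quasi-diagonal Tesler matrix is a Dyck sequence. -/
lemma qd_diag_dyck {m n : ℕ} (hn : 0 < n) {a : ℕ → ℕ → ℕ} (h : IsQDTesler m n a) :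
    IsDyckSeq m n (fun i => a i i) := by
  have hp := qd_partial hn h
  refine ⟨fun i hi => ?_, fun k hk1 hk2 => ?_, ?_⟩
  · obtain ⟨h1, _, h3⟩ := h.1 i i hi
    exact ⟨h1, h3⟩
  · have := hp k (by omega)
    simp only []
    omega
  · have := hp n le_rfl
    rw [show Finset.Icc (n + 1) n = ∅ from Finset.Icc_eq_empty (by omega),
      Finset.sum_empty, Nat.mul_div_cancel_left m hn] at this
    simp only []
    omega



/-- For a QD Tesler matrix, the row sum beyond the diagonal is the single entry. -/
lemma qd_single {m n : ℕ} {a : ℕ → ℕ → ℕ} (h : IsQDTesler m n a) {k : ℕ}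
    (hk : k + 1 ≤ n) : ∑ j ∈ Finset.Icc (k + 1) n, a k j = a k (k + 1) := by
  apply Finset.sum_eq_single_of_mem (k + 1) (by simp [Finset.mem_Icc]; omega)
  intro j hj hne
  simp only [Finset.mem_Icc] at hj
  exact h.2.2 k j (by omega)

/-- The QD Tesler matrix attached to a Dyck sequence. -/
def qdToA (m n : ℕ) (d : ℕ → ℕ) : ℕ → ℕ → ℕ := fun i j =>
  if 1 ≤ i ∧ i ≤ n ∧ j = i then d i
  else if 1 ≤ i ∧ i + 1 ≤ n ∧ j = i + 1 then i * m / n - ∑ t ∈ Finset.Icc 1 i, d t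
  else 0

lemma qdToA_isTesler {m n : ℕ} (hn : 0 < n) {d : ℕ → ℕ} (hd : IsDyckSeq m n d) :
    IsQDTesler m n (qdToA m n d) := by
  obtain ⟨hds, hdle, hdsum⟩ := hd
  refine ⟨?_, ?_, ?_⟩
  · intro i j hne
    unfold qdToA at hne
    split_ifs at hne with h1 h2
    · omega
    · omega
    · exact absurd rfl hne
  · intro i hi1 hi2
    have hdiag : qdToA m n d i i = d i := by
      unfold qdToA; rw [if_pos ⟨hi1, hi2, rfl⟩]
    have hPn : ∑ t ∈ Finset.Icc 1 n, d t = m := hdsum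
    have hPstep : ∑ t ∈ Finset.Icc 1 i, d t = (∑ t ∈ Finset.Icc 1 (i - 1), d t) + d i := by
      have := Finset.sum_Icc_succ_top (a := 1) (b := i - 1) (by omega) d
      rw [show i - 1 + 1 = i by omega] at this
      exact this
    -- upper sum
    have hupper : ∑ j ∈ Finset.Icc (i + 1) n, ((qdToA m n d i j : ℕ) : ℤ)
        = if i + 1 ≤ n then ((i * m / n - ∑ t ∈ Finset.Icc 1 i, d t : ℕ) : ℤ) else 0 := by
      by_cases hin : i + 1 ≤ n
      · rw [if_pos hin]
        rw [Finset.sum_eq_single_of_mem (i + 1) (by simp [Finset.mem_Icc]; omega)]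
        · unfold qdToA
          rw [if_neg (by omega), if_pos ⟨hi1, hin, rfl⟩]
        · intro j hj hne
          simp only [Finset.mem_Icc] at hj
          unfold qdToA
          rw [if_neg (by omega), if_neg (by omega)]
          norm_num
      · rw [if_neg hin, show Finset.Icc (i + 1) n = ∅ from Finset.Icc_eq_empty (by omega),
          Finset.sum_empty]
    -- lower sum
    have hlower : ∑ j ∈ Finset.Icc 1 (i - 1), ((qdToA m n d j i : ℕ) : ℤ)
        = if 2 ≤ i then (((i - 1) * m / n - ∑ t ∈ Finset.Icc 1 (i - 1), d t : ℕ) : ℤ)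
          else 0 := by
      by_cases hi2' : 2 ≤ i
      · rw [if_pos hi2']
        rw [Finset.sum_eq_single_of_mem (i - 1) (by simp [Finset.mem_Icc]; omega)]
        · unfold qdToA
          rw [if_neg (by omega), if_pos ⟨by omega, by omega, by omega⟩]
        · intro j hj hne
          simp only [Finset.mem_Icc] at hj
          unfold qdToA
          rw [if_neg (by omega), if_neg (by omega)]
          norm_num
      · rw [if_neg hi2', show Finset.Icc 1 (i - 1) = ∅ from Finset.Icc_eq_empty (by omega),
          Finset.sum_empty]
    rw [hdiag, hupper, hlower]
    have hP0 : ∑ t ∈ Finset.Icc 1 0, d t = 0 := by simp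
    by_cases hin : i + 1 ≤ n
    · rw [if_pos hin]
      have hle : ∑ t ∈ Finset.Icc 1 i, d t ≤ i * m / n := hdle i hi1 (by omega)
      rw [Nat.cast_sub hle]
      by_cases hi2' : 2 ≤ i
      · rw [if_pos hi2']
        have hle' : ∑ t ∈ Finset.Icc 1 (i - 1), d t ≤ (i - 1) * m / n :=
          hdle (i - 1) (by omega) (by omega)
        rw [Nat.cast_sub hle']
        omega
      · rw [if_neg hi2']
        have hi1' : i = 1 := by omega
        subst hi1'
        have hz : (1 - 1) * m / n = 0 := by norm_num
        rw [hz]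
        rw [show (1 : ℕ) - 1 = 0 from rfl, hP0] at hPstep
        omega
    · rw [if_neg hin]
      have hin' : i = n := by omega
      have hnn : i * m / n = m := by rw [hin']; exact Nat.mul_div_cancel_left m hn
      by_cases hi2' : 2 ≤ i
      · rw [if_pos hi2']
        have hle' : ∑ t ∈ Finset.Icc 1 (i - 1), d t ≤ (i - 1) * m / n :=
          hdle (i - 1) (by omega) (by omega)
        rw [Nat.cast_sub hle']
        have hPm : ∑ t ∈ Finset.Icc 1 i, d t = m := by rw [hin']; exact hPn
        omega
      · rw [if_neg hi2']
        have hn1 : n = 1 := by omega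
        subst hn1
        have hi1' : i = 1 := by omega
        subst hi1'
        have hz : (1 - 1) * m / 1 = 0 := by norm_num
        rw [hz]
        rw [show (1 : ℕ) - 1 = 0 from rfl, hP0] at hPstep
        omega
  · intro i j hij
    unfold qdToA
    rw [if_neg (by omega), if_neg (by omega)]



lemma qdToA_diag {m n : ℕ} {d : ℕ → ℕ} (hd : IsDyckSeq m n d) :
    ∀ i, qdToA m n d i i = d i := by
  intro i
  unfold qdToA
  by_cases h : 1 ≤ i ∧ i ≤ n
  · rw [if_pos ⟨h.1, h.2, rfl⟩]
  · rw [if_neg (by tauto), if_neg (by omega)]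
    by_contra hne
    exact h ⟨(hd.1 i fun h0 => hne h0.symm).1, (hd.1 i fun h0 => hne h0.symm).2⟩

lemma qdToA_of_tesler {m n : ℕ} (hn : 0 < n) {a : ℕ → ℕ → ℕ}
    (h : IsQDTesler m n a) : qdToA m n (fun i => a i i) = a := by
  funext i j
  have hp := qd_partial hn h
  unfold qdToA
  split_ifs with h1 h2
  · obtain ⟨-, -, rfl⟩ := h1
    rfl
  · obtain ⟨hi1, hin, rfl⟩ := h2
    have hpi := hp i (by omega)
    rw [qd_single h hin] at hpi
    simp only []
    omega
  · by_contra hne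
    obtain ⟨hi1, hij, hjn⟩ := h.1 i j fun h0 => hne h0.symm
    have hj2 : ¬ (i + 1 < j) := fun hc => hne (h.2.2 i j hc).symm
    have : j = i ∨ j = i + 1 := by omega
    rcases this with rfl | rfl
    · exact h1 ⟨hi1, hjn, rfl⟩
    · exact h2 ⟨hi1, hjn, rfl⟩

lemma qd_exp {m n : ℕ} (hm : 0 < m) (hn : 0 < n) (hco : Nat.Coprime m n)
    {a : ℕ → ℕ → ℕ} (h : IsQDTesler m n a)
    (hfloor : ∑ k ∈ Finset.Icc 1 (n - 1), k * m / n = (m - 1) * (n - 1) / 2) :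
    ∑ i ∈ Finset.Icc 1 (n - 1), a i (i + 1)
      = (m - 1) * (n - 1) / 2
        - ∑ k ∈ Finset.Icc 1 (n - 1), ∑ i ∈ Finset.Icc 1 k, a i i := by
  have hp := qd_partial hn h
  have hterm : ∀ k ∈ Finset.Icc 1 (n - 1),
      a k (k + 1) + ∑ i ∈ Finset.Icc 1 k, a i i = k * m / n := by
    intro k hk
    simp only [Finset.mem_Icc] at hk
    have := hp k (by omega)
    rw [qd_single h (by omega)] at this
    omega
  have hsum : (∑ i ∈ Finset.Icc 1 (n - 1), a i (i + 1))
      + ∑ k ∈ Finset.Icc 1 (n - 1), ∑ i ∈ Finset.Icc 1 k, a i i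
      = (m - 1) * (n - 1) / 2 := by
    rw [← Finset.sum_add_distrib, ← hfloor]
    exact Finset.sum_congr rfl hterm
  omega




/-- The variable `q` of `ℤ[q,u]`, realized inside `MvPolynomial (Fin 2) ℤ`. -/
noncomputable def qPoly : MvPolynomial (Fin 2) ℤ := MvPolynomial.X 0

/-- The variable `u` of `ℤ[q,u]`, realized inside `MvPolynomial (Fin 2) ℤ`. -/
noncomputable def uPoly : MvPolynomial (Fin 2) ℤ := MvPolynomial.X 1

/-- Fix coprime positive integers `m` and `n`.  In `ℤ[q,u]` one has
`∑_a q^{∑_i a(i,i+1)}·(1−u)^{#{i : a(i,i)>0}}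
  = ∑_{d ∈ D_{m/n}} q^{(m−1)(n−1)/2 − ∑_k (d_1+⋯+d_k)}·(1−u)^{#{i : d_i>0}}`,
where `a` ranges over quasi-diagonal `m/n` Tesler matrices and `d` over `D_{m/n}`; all
exponents of `q` occurring are nonnegative integers (for the right-hand side this is the
statement that `∑_{k=1}^{n−1}(d_1+⋯+d_k) ≤ (m−1)(n−1)/2`). -/
theorem qdTesler_sum_eq_dyck_sum (m n : ℕ) (hm : 0 < m) (hn : 0 < n)
    (hco : Nat.Coprime m n) :
    (∀ d : ℕ → ℕ, IsDyckSeq m n d →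
        ∑ k ∈ Finset.Icc 1 (n - 1), ∑ i ∈ Finset.Icc 1 k, d i ≤ (m - 1) * (n - 1) / 2) ∧
    ∑ᶠ a : {a : ℕ → ℕ → ℕ // IsQDTesler m n a},
        qPoly ^ (∑ i ∈ Finset.Icc 1 (n - 1), a.1 i (i + 1)) *
          (1 - uPoly) ^ ((Finset.Icc 1 n).filter (fun i => 0 < a.1 i i)).card
      = ∑ᶠ d : {d : ℕ → ℕ // IsDyckSeq m n d},
          qPoly ^ ((m - 1) * (n - 1) / 2
              - ∑ k ∈ Finset.Icc 1 (n - 1), ∑ i ∈ Finset.Icc 1 k, d.1 i) *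
            (1 - uPoly) ^ ((Finset.Icc 1 n).filter (fun i => 0 < d.1 i)).card := by
  have hfloor : ∑ k ∈ Finset.Icc 1 (n - 1), k * m / n = (m - 1) * (n - 1) / 2 :=
    qd_sum_floor hm hn hco
  constructor
  · intro d hd
    calc ∑ k ∈ Finset.Icc 1 (n - 1), ∑ i ∈ Finset.Icc 1 k, d i
        ≤ ∑ k ∈ Finset.Icc 1 (n - 1), k * m / n := by
          apply Finset.sum_le_sum
          intro k hk
          simp only [Finset.mem_Icc] at hk
          exact hd.2.1 k hk.1 hk.2
      _ = (m - 1) * (n - 1) / 2 := hfloor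
  · apply finsum_eq_of_bijective
      (fun a : {a : ℕ → ℕ → ℕ // IsQDTesler m n a} =>
        (⟨fun i => a.1 i i, qd_diag_dyck hn a.2⟩ : {d : ℕ → ℕ // IsDyckSeq m n d}))
    · rw [Function.bijective_iff_has_inverse]
      refine ⟨fun d => ⟨qdToA m n d.1, qdToA_isTesler hn d.2⟩, fun a => ?_, fun d => ?_⟩
      · exact Subtype.ext (qdToA_of_tesler hn a.2)
      · exact Subtype.ext (funext fun i => qdToA_diag d.2 i)
    · intro a
      congr 1
      congr 1
      exact qd_exp hm hn hco a.2 hfloor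
end
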